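/- A real number α is the defect of some stable positive integer if and only if α is the smallest real number β such that β is the defect of some positive integer and β ≡ α (mod 1). -/
import Mathlib


/-- `CanWrite n k` means the positive integer `n` can be written using exactly `k` ones
combined by addition and multiplication. -/
inductive CanWrite : ℕ → ℕ → Prop
  | one : CanWrite 1 1
  | add {a b j k : ℕ} : CanWrite a j → CanWrite b k → CanWrite (a + b) (j + k)
  | mul {a b j k : ℕ} : CanWrite a j → CanWrite b k → CanWrite (a * b) (j + k)

/-- The integer complexity `‖n‖`: the least number of ones needed to write `n`. -/
noncomputable def cpx (n : ℕ) : ℕ := sInf {k | CanWrite n k}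

/-- The defect `δ(n) = ‖n‖ - 3 log₃ n`. -/
noncomputable def defect (n : ℕ) : ℝ := (cpx n : ℝ) - 3 * Real.logb 3 n

/-- `n` is stable if `‖3^k n‖ = 3k + ‖n‖` for all `k ≥ 0`. -/
def Stable (n : ℕ) : Prop := ∀ k : ℕ, cpx (3 ^ k * n) = 3 * k + cpx n

/-- The stabilization length `K(n)`: the least `k` such that `3^k n` is stable. -/
noncomputable def stabLen (n : ℕ) : ℕ := sInf {k | Stable (3 ^ k * n)}

/-- The stable complexity `‖n‖_st`: equal to `‖3^k n‖ - 3k` for any `k` with `3^k n` stable. -/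
noncomputable def stableCpx (n : ℕ) : ℕ :=
  sInf {m | ∃ k : ℕ, Stable (3 ^ k * n) ∧ cpx (3 ^ k * n) = m + 3 * k}

/-- The stable defect `δ_st(n) = ‖n‖_st - 3 log₃ n`. -/
noncomputable def stableDefect (n : ℕ) : ℝ := (stableCpx n : ℝ) - 3 * Real.logb 3 n

lemma CanWrite.pos {n k : ℕ} (h : CanWrite n k) : 1 ≤ n ∧ 1 ≤ k := by
  induction h with
  | one => exact ⟨le_refl _, le_refl _⟩
  | add _ _ ih1 ih2 => omega
  | mul _ _ ih1 ih2 =>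
    refine ⟨?_, by omega⟩
    calc 1 = 1 * 1 := rfl
    _ ≤ _ := Nat.mul_le_mul ih1.1 ih2.1

lemma one_add_cube {b : ℕ} (hb3 : 3 ≤ b) : (1 + b) ^ 3 ≤ 3 * b ^ 3 := by
  nlinarith [Nat.mul_le_mul_right (b^2) hb3, Nat.mul_le_mul_right b hb3, hb3]

lemma eq_one_of_cube_le {a : ℕ} (ha : 1 ≤ a) (h : a ^ 3 ≤ 3) : a = 1 := by
  by_contra h2
  have h3 : 2 ≤ a := by omega
  have := Nat.pow_le_pow_left h3 3
  omega

lemma add_cube_le {a b j k : ℕ} (ha : 1 ≤ a) (hb : 1 ≤ b) (hj : 1 ≤ j) (hk : 1 ≤ k)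
    (h1 : a ^ 3 ≤ 3 ^ j) (h2 : b ^ 3 ≤ 3 ^ k) : (a + b) ^ 3 ≤ 3 ^ (j + k) := by
  rcases Nat.lt_or_ge j 2 with hj2 | hj2
  · -- j = 1, so a = 1
    have hj1 : j = 1 := by omega
    subst hj1
    have ha1 : a = 1 := eq_one_of_cube_le ha (by norm_num at h1; omega)
    subst ha1
    rcases Nat.lt_or_ge b 3 with hb3 | hb3
    · interval_cases b
      · calc (1+1)^3 = 8 := by norm_num
        _ ≤ 3^(1+1) := by norm_num
        _ ≤ 3^(1+k) := Nat.pow_le_pow_right (by norm_num) (by omega)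
      · have hk2 : 2 ≤ k := by
          by_contra h
          have hk1 : k = 1 := by omega
          subst hk1
          norm_num at h2
        calc (1+2)^3 = 27 := by norm_num
        _ ≤ 3^(1+2) := by norm_num
        _ ≤ 3^(1+k) := Nat.pow_le_pow_right (by norm_num) (by omega)
    · calc (1+b)^3 ≤ 3 * b^3 := one_add_cube hb3
      _ ≤ 3 * 3^k := by omega
      _ = 3^(1+k) := by ring
  · rcases Nat.lt_or_ge k 2 with hk2 | hk2
    · -- k = 1, so b = 1
      have hk1 : k = 1 := by omega
      subst hk1
      have hb1 : b = 1 := eq_one_of_cube_le hb (by norm_num at h2; omega)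
      subst hb1
      rcases Nat.lt_or_ge a 3 with ha3 | ha3
      · interval_cases a
        · calc (1+1)^3 = 8 := by norm_num
          _ ≤ 3^(2+1) := by norm_num
          _ ≤ 3^(j+1) := Nat.pow_le_pow_right (by norm_num) (by omega)
        · calc (2+1)^3 = 27 := by norm_num
          _ ≤ 3^(2+1) := by norm_num
          _ ≤ 3^(j+1) := Nat.pow_le_pow_right (by norm_num) (by omega)
      · calc (a+1)^3 = (1+a)^3 := by ring
        _ ≤ 3 * a^3 := one_add_cube ha3
        _ ≤ 3 * 3^j := by omega
        _ = 3^(j+1) := by ring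
    · -- j, k ≥ 2
      have hx : (9:ℕ) ≤ 3^j := by calc (9:ℕ) = 3^2 := by norm_num
                                    _ ≤ 3^j := Nat.pow_le_pow_right (by norm_num) hj2
      have hy : (9:ℕ) ≤ 3^k := by calc (9:ℕ) = 3^2 := by norm_num
                                    _ ≤ 3^k := Nat.pow_le_pow_right (by norm_num) hk2
      have key : (a+b)^3 ≤ 4 * a^3 + 4 * b^3 := by
        zify
        nlinarith [mul_nonneg (sq_nonneg ((a:ℤ) - b)) (show (0:ℤ) ≤ (a:ℤ) + b by positivity)]
      have h49 : 4 * 3^j + 4 * 3^k ≤ 3^j * 3^k := by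
        nlinarith [Nat.mul_le_mul hx (le_refl (3^k)), Nat.mul_le_mul (le_refl (3^j)) hy]
      calc (a+b)^3 ≤ 4*a^3 + 4*b^3 := key
      _ ≤ 4*3^j + 4*3^k := by omega
      _ ≤ 3^j * 3^k := h49
      _ = 3^(j+k) := (pow_add 3 j k).symm

lemma CanWrite.cube_le {n k : ℕ} (h : CanWrite n k) : n ^ 3 ≤ 3 ^ k := by
  induction h with
  | one => norm_num
  | add h1 h2 ih1 ih2 => exact add_cube_le h1.pos.1 h2.pos.1 h1.pos.2 h2.pos.2 ih1 ih2
  | mul h1 h2 ih1 ih2 => rw [mul_pow, pow_add]; exact Nat.mul_le_mul ih1 ih2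

lemma canWrite_self {n : ℕ} (h : 1 ≤ n) : CanWrite n n := by
  induction n with
  | zero => omega
  | succ m ih =>
    rcases Nat.eq_or_lt_of_le h with h1 | h1
    · rw [← h1]; exact CanWrite.one
    · exact CanWrite.add (ih (by omega)) CanWrite.one

lemma cpx_mem {n : ℕ} (h : 1 ≤ n) : CanWrite n (cpx n) :=
  Nat.sInf_mem ⟨n, canWrite_self h⟩

lemma cpx_le {n k : ℕ} (h : CanWrite n k) : cpx n ≤ k := Nat.sInf_le h

lemma cube_le_cpx {n : ℕ} (h : 1 ≤ n) : n ^ 3 ≤ 3 ^ (cpx n) := (cpx_mem h).cube_le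

lemma cpx_mul_le {a b : ℕ} (ha : 1 ≤ a) (hb : 1 ≤ b) : cpx (a * b) ≤ cpx a + cpx b :=
  cpx_le (CanWrite.mul (cpx_mem ha) (cpx_mem hb))

lemma cpx_three : cpx 3 = 3 := by
  have h1 : cpx 3 ≤ 3 := cpx_le (canWrite_self (by norm_num))
  have h2 : (3:ℕ)^3 ≤ 3^(cpx 3) := cube_le_cpx (by norm_num)
  have := (Nat.pow_le_pow_iff_right (by norm_num : 1 < 3)).1 h2
  omega

lemma cpx_pow3_mul_le {m : ℕ} (hm : 1 ≤ m) (k : ℕ) : cpx (3 ^ k * m) ≤ 3 * k + cpx m := by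
  induction k with
  | zero => simp
  | succ k ih =>
    have h1 : 3 ^ (k+1) * m = 3 * (3 ^ k * m) := by ring
    rw [h1]
    calc cpx (3 * (3^k * m)) ≤ cpx 3 + cpx (3^k * m) :=
          cpx_mul_le (by norm_num) (Nat.one_le_iff_ne_zero.2 (by positivity))
    _ = 3 + cpx (3^k * m) := by rw [cpx_three]
    _ ≤ 3 + (3 * k + cpx m) := by omega
    _ = 3 * (k+1) + cpx m := by ring

lemma le_cpx_pow3_mul {m : ℕ} (hm : 1 ≤ m) (k : ℕ) : 3 * k ≤ cpx (3 ^ k * m) := by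
  have h1 : (3:ℕ) ^ (3 * k) ≤ (3 ^ k * m) ^ 3 := by
    calc (3:ℕ)^(3*k) = (3^k)^3 := by rw [← pow_mul, Nat.mul_comm]
    _ ≤ (3^k * m)^3 := Nat.pow_le_pow_left (Nat.le_mul_of_pos_right _ hm) 3
  have h2 := (cube_le_cpx (show 1 ≤ 3^k*m from Nat.one_le_iff_ne_zero.2 (by positivity))).trans' h1
  exact (Nat.pow_le_pow_iff_right (by norm_num : 1 < 3)).1 h2

lemma exists_stable (m : ℕ) (hm : 1 ≤ m) : ∃ K : ℕ, Stable (3 ^ K * m) := by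
  set a : ℕ → ℕ := fun k => cpx (3 ^ k * m) - 3 * k with ha
  have hcpx : ∀ k, cpx (3 ^ k * m) = a k + 3 * k := by
    intro k
    have := le_cpx_pow3_mul hm k
    simp only [ha]
    omega
  have hstep : ∀ k, a (k + 1) ≤ a k := by
    intro k
    have h1 : cpx (3 ^ (k+1) * m) ≤ 3 + cpx (3 ^ k * m) := by
      have e : 3 ^ (k+1) * m = 3 * (3 ^ k * m) := by ring
      rw [e]
      calc cpx (3 * (3^k * m)) ≤ cpx 3 + cpx (3^k * m) :=
            cpx_mul_le (by norm_num) (Nat.one_le_iff_ne_zero.2 (by positivity))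
      _ = 3 + cpx (3^k * m) := by rw [cpx_three]
    simp only [ha]
    omega
  have hmono : ∀ K j, a (K + j) ≤ a K := by
    intro K j
    induction j with
    | zero => simp
    | succ j ih => exact (hstep (K + j)).trans ih
  obtain ⟨K, hK⟩ : ∃ K, a K = sInf (Set.range a) := by
    have : sInf (Set.range a) ∈ Set.range a := Nat.sInf_mem (Set.range_nonempty a)
    obtain ⟨K, hK⟩ := this
    exact ⟨K, hK⟩
  refine ⟨K, fun j => ?_⟩
  have e : 3 ^ j * (3 ^ K * m) = 3 ^ (K + j) * m := by rw [pow_add]; ring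
  have hle : a (K + j) ≤ a K := hmono K j
  have hge : a K ≤ a (K + j) := hK ▸ Nat.sInf_le (Set.mem_range_self _)
  have heq : a (K + j) = a K := le_antisymm hle hge
  rw [e, hcpx (K + j), hcpx K, heq]
  ring

lemma logb_pow3_mul {m : ℕ} (hm : 1 ≤ m) (k : ℕ) :
    Real.logb 3 ((3 ^ k * m : ℕ) : ℝ) = k + Real.logb 3 m := by
  have hm0 : (0:ℝ) < (m:ℝ) := by exact_mod_cast hm
  push_cast
  rw [Real.logb_mul (by positivity) (ne_of_gt hm0), Real.logb_pow,
    Real.logb_self_eq_one, mul_one] <;> norm_num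

lemma logb_le_cpx {n : ℕ} (hn : 1 ≤ n) : 3 * Real.logb 3 n ≤ (cpx n : ℝ) := by
  have h := cube_le_cpx hn
  have hR : ((n:ℝ)) ^ 3 ≤ (3:ℝ) ^ (cpx n) := by exact_mod_cast h
  have hn0 : (0:ℝ) < (n:ℝ) := by exact_mod_cast hn
  have h2 : Real.logb 3 ((n:ℝ) ^ 3) ≤ Real.logb 3 ((3:ℝ) ^ (cpx n)) :=
    Real.logb_le_logb_of_le (by norm_num) (by positivity) hR
  rw [Real.logb_pow, Real.logb_pow, Real.logb_self_eq_one (by norm_num : (1:ℝ) < 3),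
    mul_one] at h2
  push_cast at h2
  linarith

lemma cube_eq_pow_mul {a b : ℕ} (ha : 1 ≤ a) (hb : 1 ≤ b) {t : ℕ}
    (h : a ^ 3 = 3 ^ t * b ^ 3) : ∃ s : ℕ, a = 3 ^ s * b := by
  have ha0 : a ≠ 0 := by omega
  have hb0 : b ≠ 0 := by omega
  have hfa := congrArg (fun x : ℕ => x.factorization 3) h
  simp only [Nat.factorization_mul (pow_ne_zero t (by norm_num : (3:ℕ) ≠ 0)) (pow_ne_zero 3 hb0),
    Nat.factorization_pow, Nat.Prime.factorization_pow (by norm_num : Nat.Prime 3),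
    Finsupp.add_apply, Finsupp.smul_apply, Finsupp.single_eq_same, smul_eq_mul] at hfa
  -- hfa : 3 * a.factorization 3 = t + 3 * b.factorization 3
  obtain ⟨s, hs⟩ : ∃ s, t = 3 * s := ⟨a.factorization 3 - b.factorization 3, by omega⟩
  refine ⟨s, Nat.pow_left_injective (by norm_num : 3 ≠ 0) ?_⟩
  show a ^ 3 = (3 ^ s * b) ^ 3
  rw [h, hs, mul_pow, ← pow_mul, Nat.mul_comm 3 s]

example : True := trivial

lemma exists_pow_of_defect_sub_int {m n : ℕ} (hm : 1 ≤ m) (hn : 1 ≤ n) {z : ℤ}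
    (h : defect m - defect n = (z : ℝ)) :
    (∃ k : ℕ, m = 3 ^ k * n) ∨ (∃ k : ℕ, n = 3 ^ k * m) := by
  have hm0 : (0:ℝ) < m := by exact_mod_cast hm
  have hn0 : (0:ℝ) < n := by exact_mod_cast hn
  set w : ℤ := (cpx m : ℤ) - (cpx n : ℤ) - z with hw
  have hlog : Real.logb 3 ((m:ℝ)^3 / (n:ℝ)^3) = (w : ℝ) := by
    rw [Real.logb_div (by positivity) (by positivity), Real.logb_pow, Real.logb_pow]
    unfold defect at h
    push_cast [hw]
    linarith
  have hx : ((m:ℝ)^3 / (n:ℝ)^3) = (3:ℝ) ^ (w:ℝ) := by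
    rw [← hlog, Real.rpow_logb (by norm_num) (by norm_num) (by positivity)]
  have hx2 : (m:ℝ)^3 = (3:ℝ) ^ (w:ℝ) * (n:ℝ)^3 := by
    rw [← hx, div_mul_cancel₀]
    positivity
  rcases le_or_gt 0 w with hw0 | hw0
  · left
    obtain ⟨t, ht⟩ := Int.eq_ofNat_of_zero_le hw0
    have hr : (m:ℝ)^3 = (3:ℝ)^(t:ℕ) * (n:ℝ)^3 := by
      rw [hx2, ht, ← Real.rpow_natCast 3 t]
      norm_num
    have hnat : m^3 = 3^t * n^3 := by exact_mod_cast hr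
    exact cube_eq_pow_mul hm hn hnat
  · right
    set t : ℕ := (-w).toNat with ht
    have htw : (t : ℝ) + (w : ℝ) = 0 := by
      have : (t : ℤ) = -w := Int.toNat_of_nonneg (by omega)
      have := congrArg (fun x : ℤ => (x:ℝ)) this
      push_cast at this
      linarith
    have hr : (n:ℝ)^3 = (3:ℝ)^(t:ℕ) * (m:ℝ)^3 := by
      rw [hx2, ← mul_assoc, ← Real.rpow_natCast 3 t, ← Real.rpow_add (by norm_num), htw,
        Real.rpow_zero, one_mul]
    have hnat : n^3 = 3^t * m^3 := by exact_mod_cast hr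
    exact cube_eq_pow_mul hn hm hnat

theorem stable_defect_iff_least_mod_one (α : ℝ) :
    (∃ n : ℕ, 0 < n ∧ Stable n ∧ defect n = α) ↔
    ((∃ m : ℕ, 0 < m ∧ defect m = α) ∧
      ∀ β : ℝ, (∃ m : ℕ, 0 < m ∧ defect m = β) → (∃ z : ℤ, β - α = (z : ℝ)) → α ≤ β) := by
  constructor
  · rintro ⟨n, hn, hstab, rfl⟩
    refine ⟨⟨n, hn, rfl⟩, ?_⟩
    rintro β ⟨m, hm, rfl⟩ ⟨z, hz⟩
    rcases exists_pow_of_defect_sub_int hm hn hz with ⟨k, rfl⟩ | ⟨k, rfl⟩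
    · -- m = 3^k * n : defect m = defect n by stability
      unfold defect
      rw [logb_pow3_mul hn, hstab k]
      push_cast
      ring_nf
      linarith
    · -- n = 3^k * m : defect n ≤ defect m by subadditivity
      unfold defect
      rw [logb_pow3_mul hm]
      have := cpx_pow3_mul_le hm k
      have hc : (cpx (3^k*m) : ℝ) ≤ 3*k + cpx m := by exact_mod_cast this
      push_cast
      linarith
  · rintro ⟨⟨m, hm, rfl⟩, hmin⟩
    obtain ⟨K, hK⟩ := exists_stable m hm
    have hpos : 0 < 3 ^ K * m := by positivity
    refine ⟨3 ^ K * m, hpos, hK, ?_⟩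
    have h1 : defect (3 ^ K * m) ≤ defect m := by
      unfold defect
      rw [logb_pow3_mul hm]
      have hc : (cpx (3^K*m) : ℝ) ≤ 3*K + cpx m := by exact_mod_cast cpx_pow3_mul_le hm K
      push_cast
      linarith
    have h2 : defect m ≤ defect (3 ^ K * m) := by
      refine hmin _ ⟨3 ^ K * m, hpos, rfl⟩ ⟨(cpx (3^K*m) : ℤ) - (cpx m : ℤ) - 3*K, ?_⟩
      unfold defect
      rw [logb_pow3_mul hm]
      push_cast
      ring
    linarith
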